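/- arXiv:2410.13430 — 2 statements merged into one kernel-verified Lean document; each statement's English description precedes it below -/
import Mathlib

section
/- Let q, z, d ∈ ℂ with |q| < 1, d ≠ 0, z ≠ d, |dz| < 1, and suppose 1 − z q^k ≠ 0 for every integer k ≥ 1. Then ∑_{n=1}^∞ (−1)^n (z/d;q²)_n z^n d^n q^{n²} / ((z−d) (zq;q)_{2n}) = ∑_{n=1}^∞ (dq;q)_{n−1} z^n q^{n(n+1)/2} / (zq;q)_n. -/
open Finset Filter Topology

/-- Finite q-Pochhammer symbol `(a;q)_n`. -/
noncomputable def qPoch (q a : ℂ) (n : ℕ) : ℂ :=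
  ∏ k ∈ Finset.range n, (1 - a * q ^ k)

/-- Infinite q-Pochhammer symbol `(a;q)_∞`. -/
noncomputable def qPochInf (q a : ℂ) : ℂ :=
  ∏' k : ℕ, (1 - a * q ^ k)

/-- q-binomial coefficient. -/
noncomputable def qBinom (q : ℂ) (N n : ℕ) : ℂ :=
  qPoch q q N / (qPoch q q n * qPoch q q (N - n))

/-! ### Auxiliary terms -/

noncomputable def ltm (q d w : ℂ) (n : ℕ) : ℂ :=
  w^(n+1) * q^((n+1)*(n+1)) * (∏ k ∈ Finset.range n, (w * q^(2*k+2) - d)) /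
    (∏ k ∈ Finset.range (2*(n+1)), (1 - w * q^(k+1)))

noncomputable def rtm (q d w : ℂ) (n : ℕ) : ℂ :=
  (∏ k ∈ Finset.range n, (1 - d*q^(k+1))) * w^(n+1) * q^((n+1)*(n+2)/2) /
    (∏ k ∈ Finset.range (n+1), (1 - w*q^(k+1)))

noncomputable def utm (q d w : ℂ) (m : ℕ) : ℂ :=
  (∏ k ∈ Finset.range m, (1 - d*q^(k+1))) * w^(m+2) * q^((m+2)*(m+3)/2) /
    (∏ k ∈ Finset.range m, (1 - w*q^(k+3)))

section Aux
variable (q d w : ℂ)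

lemma prodw_ne (hw : ∀ k : ℕ, 1 - w*q^(k+1) ≠ 0) (n : ℕ) :
    (∏ k ∈ Finset.range n, (1 - w*q^(k+1))) ≠ 0 :=
  Finset.prod_ne_zero_iff.2 fun k _ => hw k

lemma prodw3_ne (hw : ∀ k : ℕ, 1 - w*q^(k+1) ≠ 0) (n : ℕ) :
    (∏ k ∈ Finset.range n, (1 - w*q^(k+3))) ≠ 0 :=
  Finset.prod_ne_zero_iff.2 fun k _ => by
    have := hw (k+2); rwa [show k+2+1 = k+3 by omega] at this

lemma hw_one (hw : ∀ k : ℕ, 1 - w*q^(k+1) ≠ 0) (j : ℕ) (hj : 1 ≤ j) :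
    1 - w*q^j ≠ 0 := by
  obtain ⟨k, rfl⟩ := Nat.exists_eq_add_of_le hj
  have := hw k; rwa [show k+1 = 1+k by omega] at this

lemma hw_shift (hw : ∀ k : ℕ, 1 - w*q^(k+1) ≠ 0) :
    ∀ k : ℕ, 1 - (w*q^2)*q^(k+1) ≠ 0 := by
  intro k
  have := hw (k+2)
  rw [show k+2+1 = k+3 by omega] at this
  rwa [show (w*q^2)*q^(k+1) = w*q^(k+3) by ring]

/-- recurrence for rtm -/
lemma rec_rtm (hw : ∀ k : ℕ, 1 - w*q^(k+1) ≠ 0) (n : ℕ) :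
    rtm q d w (n+1) * (1 - w*q^(n+2)) =
      rtm q d w n * ((1 - d*q^(n+1)) * (w * q^(n+2))) := by
  have e1 : (n+1+1)*(n+1+2)/2 = (n+1)*(n+2)/2 + (n+2) := by
    rw [show (n+1+1)*(n+1+2) = (n+1)*(n+2) + 2*(n+2) by ring,
      Nat.add_mul_div_left _ _ (by norm_num : 0 < 2)]
  have h1 := prodw_ne q w hw (n+1)
  have h2 := hw (n+1)
  rw [show n+1+1 = n+2 by omega] at h2
  unfold rtm
  rw [e1, Finset.prod_range_succ (fun k => 1 - d*q^(k+1)) n,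
    Finset.prod_range_succ (fun k => 1 - w*q^(k+1)) (n+1)]
  rw [show n+1+1 = n+2 by omega, pow_add]
  field_simp
  ring

/-- recurrence for utm -/
lemma rec_utm (hw : ∀ k : ℕ, 1 - w*q^(k+1) ≠ 0) (m : ℕ) :
    utm q d w (m+1) * (1 - w*q^(m+3)) =
      utm q d w m * ((1 - d*q^(m+1)) * (w * q^(m+3))) := by
  have e1 : (m+1+2)*(m+1+3)/2 = (m+2)*(m+3)/2 + (m+3) := by
    rw [show (m+1+2)*(m+1+3) = (m+2)*(m+3) + 2*(m+3) by ring,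
      Nat.add_mul_div_left _ _ (by norm_num : 0 < 2)]
  have h1 := prodw3_ne q w hw m
  have h2 := hw (m+2)
  rw [show m+2+1 = m+3 by omega] at h2
  unfold utm
  rw [e1, Finset.prod_range_succ (fun k => 1 - d*q^(k+1)) m,
    Finset.prod_range_succ (fun k => 1 - w*q^(k+3)) m]
  rw [show m+1+2 = m+3 by omega, pow_add]
  field_simp
  ring

/-- recurrence for ltm -/
lemma rec_ltm (hw : ∀ k : ℕ, 1 - w*q^(k+1) ≠ 0) (n : ℕ) :
    ltm q d w (n+1) * ((1 - w*q^(2*n+3))*(1 - w*q^(2*n+4))) =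
      ltm q d w n * (w * q^(2*n+3) * (w*q^(2*n+2) - d)) := by
  have h1 := prodw_ne q w hw (2*(n+1))
  have h2 := hw (2*n+2)
  have h3 := hw (2*n+3)
  rw [show 2*n+2+1 = 2*n+3 by omega] at h2
  rw [show 2*n+3+1 = 2*n+4 by omega] at h3
  have h2' : 1 - w*q^(2*(n+1)+1) ≠ 0 := by rwa [show 2*(n+1)+1 = 2*n+3 by omega]
  have h3' : 1 - w*q^(2*(n+1)+1+1) ≠ 0 := by rwa [show 2*(n+1)+1+1 = 2*n+4 by omega]
  unfold ltm
  rw [show 2*(n+1+1) = (2*(n+1))+1+1 by omega,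
    Finset.prod_range_succ (fun k => 1 - w*q^(k+1)) ((2*(n+1))+1),
    Finset.prod_range_succ (fun k => 1 - w*q^(k+1)) (2*(n+1)),
    Finset.prod_range_succ (fun k => w*q^(2*k+2) - d) n]
  field_simp
  ring

end Aux
section FEAlg
variable (q d w : ℂ)

lemma fer_a (hw : ∀ k : ℕ, 1 - w*q^(k+1) ≠ 0) :
    (1 - w*q)*(1 - w*q^2) * rtm q d w 0 = w*q - utm q d w 0 := by
  have h1 := hw 0
  rw [show (0:ℕ)+1 = 1 by omega, pow_one] at h1
  unfold rtm utm
  norm_num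
  field_simp

lemma fer_b (hw : ∀ k : ℕ, 1 - w*q^(k+1) ≠ 0) (m : ℕ) :
    (1 - w*q)*(1 - w*q^2) * rtm q d w (m+1) = (1 - d*q^(m+1)) * utm q d w m := by
  have e1 : (m+1+1)*(m+1+2)/2 = (m+2)*(m+3)/2 := by
    rw [show m+1+1 = m+2 by omega, show m+1+2 = m+3 by omega]
  have h3 := prodw3_ne q w hw m
  have hprod : (∏ k ∈ Finset.range (m+1+1), (1 - w*q^(k+1))) =
      (∏ k ∈ Finset.range m, (1 - w*q^(k+3))) * (1 - w*q) * (1 - w*q^2) := by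
    rw [Finset.prod_range_succ' (fun k => 1 - w*q^(k+1)) (m+1),
        Finset.prod_range_succ' (fun k => 1 - w*q^(k+1+1)) m]
    have : ∀ k, 1 - w*q^(k+1+1+1) = 1 - w*q^(k+3) := fun k => by
      rw [show k+1+1+1 = k+3 by omega]
    rw [Finset.prod_congr rfl (fun k _ => this k)]
    ring
  unfold rtm utm
  rw [e1, hprod, Finset.prod_range_succ (fun k => 1 - d*q^(k+1)) m]
  have hq1 : (1 - w*q) ≠ 0 := by
    have := hw 0; rwa [show (0:ℕ)+1 = 1 by omega, pow_one] at this
  have hq2 : (1 - w*q^2) ≠ 0 := by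
    have := hw 1; rwa [show (1:ℕ)+1 = 2 by omega] at this
  field_simp

lemma fer_d (hw : ∀ k : ℕ, 1 - w*q^(k+1) ≠ 0) (m : ℕ) :
    (1 - d*q^(m+1)) * utm q d w m - w*q*(w*q^2 - d) * rtm q d (w*q^2) m =
      utm q d w m - utm q d w (m+1) := by
  have e1 : (m+1+2)*(m+1+3)/2 = (m+2)*(m+3)/2 + (m+3) := by
    rw [show (m+1+2)*(m+1+3) = (m+2)*(m+3) + 2*(m+3) by ring,
      Nat.add_mul_div_left _ _ (by norm_num : 0 < 2)]
  have e2 : (m+2)*(m+3)/2 = (m+1)*(m+2)/2 + (m+2) := by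
    rw [show (m+2)*(m+3) = (m+1)*(m+2) + 2*(m+2) by ring,
      Nat.add_mul_div_left _ _ (by norm_num : 0 < 2)]
  have h3 := prodw3_ne q w hw m
  have h4 : 1 - w*q^(m+3) ≠ 0 := by
    have := hw (m+2); rwa [show m+2+1 = m+3 by omega] at this
  -- rewrite the product in rtm q d (w*q^2) m
  have hprod : (∏ k ∈ Finset.range (m+1), (1 - (w*q^2)*q^(k+1))) =
      (∏ k ∈ Finset.range m, (1 - w*q^(k+3))) * (1 - w*q^(m+3)) := by
    rw [Finset.prod_range_succ (fun k => 1 - (w*q^2)*q^(k+1)) m]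
    have : ∀ k, 1 - (w*q^2)*q^(k+1) = 1 - w*q^(k+3) := fun k => by
      rw [show (w*q^2)*q^(k+1) = w*q^(k+3) by ring]
    rw [Finset.prod_congr rfl (fun k _ => this k), this m]
  unfold rtm utm
  rw [e1, e2, hprod, Finset.prod_range_succ (fun k => 1 - d*q^(k+1)) m,
    Finset.prod_range_succ (fun k => 1 - w*q^(k+3)) m]
  field_simp
  ring

lemma ltm_zero (hw : ∀ k : ℕ, 1 - w*q^(k+1) ≠ 0) :
    (1 - w*q)*(1 - w*q^2) * ltm q d w 0 = w*q := by
  have hq1 : (1 - w*q) ≠ 0 := by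
    have := hw 0; rwa [show (0:ℕ)+1 = 1 by omega, pow_one] at this
  have hq2 : (1 - w*q^2) ≠ 0 := by
    have := hw 1; rwa [show (1:ℕ)+1 = 2 by omega] at this
  unfold ltm
  rw [show 2*(0+1) = 2 by omega, Finset.prod_range_succ, Finset.prod_range_succ,
    Finset.prod_range_zero]
  norm_num
  field_simp

lemma ltm_shift (hw : ∀ k : ℕ, 1 - w*q^(k+1) ≠ 0) (n : ℕ) :
    (1 - w*q)*(1 - w*q^2) * ltm q d w (n+1) =
      w*q*(w*q^2 - d) * ltm q d (w*q^2) n := by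
  have h1 := prodw3_ne q w hw (2*(n+1))
  have hq1 : (1 - w*q) ≠ 0 := by
    have := hw 0; rwa [show (0:ℕ)+1 = 1 by omega, pow_one] at this
  have hq2 : (1 - w*q^2) ≠ 0 := by
    have := hw 1; rwa [show (1:ℕ)+1 = 2 by omega] at this
  have hden : (∏ k ∈ Finset.range (2*(n+1+1)), (1 - w*q^(k+1))) =
      (∏ k ∈ Finset.range (2*(n+1)), (1 - w*q^(k+3))) * (1 - w*q) * (1 - w*q^2) := by
    rw [show 2*(n+1+1) = 2*(n+1)+1+1 by omega,
        Finset.prod_range_succ' (fun k => 1 - w*q^(k+1)) (2*(n+1)+1),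
        Finset.prod_range_succ' (fun k => 1 - w*q^(k+1+1)) (2*(n+1))]
    have : ∀ k, 1 - w*q^(k+1+1+1) = 1 - w*q^(k+3) := fun k => by
      rw [show k+1+1+1 = k+3 by omega]
    rw [Finset.prod_congr rfl (fun k _ => this k)]
    ring
  have hden2 : (∏ k ∈ Finset.range (2*(n+1)), (1 - (w*q^2)*q^(k+1))) =
      ∏ k ∈ Finset.range (2*(n+1)), (1 - w*q^(k+3)) := by
    refine Finset.prod_congr rfl (fun k _ => ?_)
    rw [show (w*q^2)*q^(k+1) = w*q^(k+3) by ring]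
  have hnum : (∏ k ∈ Finset.range (n+1), (w*q^(2*k+2) - d)) =
      (∏ k ∈ Finset.range n, ((w*q^2)*q^(2*k+2) - d)) * (w*q^2 - d) := by
    rw [Finset.prod_range_succ' (fun k => w*q^(2*k+2) - d) n]
    have : ∀ k, w*q^(2*(k+1)+2) - d = (w*q^2)*q^(2*k+2) - d := fun k => by
      rw [show 2*(k+1)+2 = (2*k+2)+2 by omega]; ring
    rw [Finset.prod_congr rfl (fun k _ => this k)]
  unfold ltm
  rw [hden, hden2, hnum]
  field_simp
  ring

end FEAlg
section Analysis

lemma norm_rec_le (f a b : ℕ → ℂ) (hb : ∀ n, b n ≠ 0)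
    (hrec : ∀ n, f (n+1) * b n = f n * a n) (n : ℕ)
    (h : ‖a n‖ ≤ (1/2) * ‖b n‖) : ‖f (n+1)‖ ≤ (1/2) * ‖f n‖ := by
  have hbpos : 0 < ‖b n‖ := norm_pos_iff.2 (hb n)
  have := congrArg norm (hrec n)
  rw [norm_mul, norm_mul] at this
  have h2 : ‖f (n+1)‖ * ‖b n‖ ≤ ((1/2) * ‖f n‖) * ‖b n‖ := by
    rw [this]
    calc ‖f n‖ * ‖a n‖ ≤ ‖f n‖ * ((1/2) * ‖b n‖) :=
          mul_le_mul_of_nonneg_left h (norm_nonneg _)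
      _ = ((1/2) * ‖f n‖) * ‖b n‖ := by ring
  exact le_of_mul_le_mul_right h2 hbpos

lemma summable_of_rec (f a b : ℕ → ℂ) (hb : ∀ n, b n ≠ 0)
    (hrec : ∀ n, f (n+1) * b n = f n * a n)
    (ha : Filter.Tendsto a Filter.atTop (nhds 0))
    (hb1 : Filter.Tendsto b Filter.atTop (nhds 1)) : Summable f := by
  apply summable_of_ratio_norm_eventually_le (r := 1/2) (by norm_num)
  have h1 : ∀ᶠ n in Filter.atTop, ‖a n‖ < 1/4 := by
    have h0 : Filter.Tendsto (fun n => ‖a n‖) Filter.atTop (nhds 0) := by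
      simpa using ha.norm
    exact h0.eventually (eventually_lt_nhds (by norm_num : (0:ℝ) < 1/4))
  have h2 : ∀ᶠ n in Filter.atTop, 1/2 < ‖b n‖ := by
    have : Filter.Tendsto (fun n => ‖b n‖) Filter.atTop (nhds 1) := by
      simpa using hb1.norm
    exact this.eventually (eventually_gt_nhds (by norm_num : (1/2:ℝ) < 1))
  filter_upwards [h1, h2] with n hn1 hn2
  exact norm_rec_le f a b hb hrec n (by nlinarith [norm_nonneg (a n), norm_nonneg (b n)])

lemma norm_le_of_rec (f a b : ℕ → ℂ) (hb : ∀ n, b n ≠ 0)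
    (hrec : ∀ n, f (n+1) * b n = f n * a n)
    (hhalf : ∀ n, ‖a n‖ ≤ (1/2) * ‖b n‖) : ∀ n, ‖f n‖ ≤ (1/2)^n * ‖f 0‖ := by
  intro n
  induction n with
  | zero => simp
  | succ n ih =>
    calc ‖f (n+1)‖ ≤ (1/2) * ‖f n‖ := norm_rec_le f a b hb hrec n (hhalf n)
      _ ≤ (1/2) * ((1/2)^n * ‖f 0‖) := by linarith
      _ = (1/2)^(n+1) * ‖f 0‖ := by ring

lemma norm_tsum_le_of_half (f : ℕ → ℂ) (h : ∀ n, ‖f n‖ ≤ (1/2)^n * ‖f 0‖) :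
    ‖∑' n, f n‖ ≤ 2 * ‖f 0‖ := by
  have hg : HasSum (fun n : ℕ => (1/2:ℝ)^n * ‖f 0‖) (2 * ‖f 0‖) := by
    have h0 := hasSum_geometric_of_lt_one (by norm_num : (0:ℝ) ≤ 1/2)
      (by norm_num : (1/2:ℝ) < 1)
    have h1 := h0.mul_right ‖f 0‖
    have e : (1 - (1/2:ℝ))⁻¹ = 2 := by norm_num
    rwa [e] at h1
  exact tsum_of_norm_bounded hg h

lemma tsum_telescope (f : ℕ → ℂ) (hf : Summable f) :
    ∑' n, (f n - f (n+1)) = f 0 := by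
  have hs : Summable (fun n => f n - f (n+1)) :=
    hf.sub ((summable_nat_add_iff 1).2 hf)
  have h1 := hs.hasSum.tendsto_sum_nat
  have h2 : Filter.Tendsto (fun N => ∑ i ∈ Finset.range N, (f i - f (i+1)))
      Filter.atTop (nhds (f 0)) := by
    have h3 : (fun N => ∑ i ∈ Finset.range N, (f i - f (i+1)))
        = fun N => f 0 - f N := by
      funext N; exact Finset.sum_range_sub' f N
    rw [h3]
    simpa using tendsto_const_nhds.sub hf.tendsto_atTop_zero
  exact tendsto_nhds_unique h1 h2

end Analysis
noncomputable def cfm (q d w : ℂ) : ℂ := w*q*(w*q^2 - d) / ((1 - w*q)*(1 - w*q^2))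

section Summability
variable (q d w : ℂ)

lemma tpowj (hq : ‖q‖ < 1) (j : ℕ) :
    Filter.Tendsto (fun n : ℕ => q^(n+j)) Filter.atTop (nhds 0) := by
  have t1 : Filter.Tendsto (fun n : ℕ => q^n) Filter.atTop (nhds 0) :=
    tendsto_pow_atTop_nhds_zero_of_norm_lt_one hq
  simpa [pow_add] using t1.mul_const (q^j)

lemma tpow2j (hq : ‖q‖ < 1) (j : ℕ) :
    Filter.Tendsto (fun n : ℕ => q^(2*n+j)) Filter.atTop (nhds 0) := by
  have hq2 : ‖q^2‖ < 1 := by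
    rw [norm_pow]
    exact pow_lt_one₀ (norm_nonneg q) hq (by norm_num)
  have t1 : Filter.Tendsto (fun n : ℕ => (q^2)^n) Filter.atTop (nhds 0) :=
    tendsto_pow_atTop_nhds_zero_of_norm_lt_one hq2
  have : ∀ n : ℕ, (q^2)^n * q^j = q^(2*n+j) := fun n => by
    rw [← pow_mul, ← pow_add]
  simpa [this] using t1.mul_const (q^j)

lemma summable_rtm (hq : ‖q‖ < 1) (hw : ∀ k : ℕ, 1 - w*q^(k+1) ≠ 0) :
    Summable (rtm q d w) := by
  apply summable_of_rec (rtm q d w)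
    (fun n => (1 - d*q^(n+1)) * (w * q^(n+2))) (fun n => 1 - w*q^(n+2))
  · intro n
    have := hw (n+1); rwa [show n+1+1 = n+2 by omega] at this
  · exact rec_rtm q d w hw
  · have t1 : Filter.Tendsto (fun n : ℕ => 1 - d*q^(n+1)) Filter.atTop (nhds 1) := by
      simpa using tendsto_const_nhds.sub ((tpowj q hq 1).const_mul d)
    have t2 : Filter.Tendsto (fun n : ℕ => w*q^(n+2)) Filter.atTop (nhds 0) := by
      simpa using (tpowj q hq 2).const_mul w
    simpa using t1.mul t2
  · simpa using tendsto_const_nhds.sub ((tpowj q hq 2).const_mul w)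

lemma summable_utm (hq : ‖q‖ < 1) (hw : ∀ k : ℕ, 1 - w*q^(k+1) ≠ 0) :
    Summable (utm q d w) := by
  apply summable_of_rec (utm q d w)
    (fun n => (1 - d*q^(n+1)) * (w * q^(n+3))) (fun n => 1 - w*q^(n+3))
  · intro n
    have := hw (n+2); rwa [show n+2+1 = n+3 by omega] at this
  · exact rec_utm q d w hw
  · have t1 : Filter.Tendsto (fun n : ℕ => 1 - d*q^(n+1)) Filter.atTop (nhds 1) := by
      simpa using tendsto_const_nhds.sub ((tpowj q hq 1).const_mul d)
    have t2 : Filter.Tendsto (fun n : ℕ => w*q^(n+3)) Filter.atTop (nhds 0) := by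
      simpa using (tpowj q hq 3).const_mul w
    simpa using t1.mul t2
  · simpa using tendsto_const_nhds.sub ((tpowj q hq 3).const_mul w)

lemma summable_ltm (hq : ‖q‖ < 1) (hw : ∀ k : ℕ, 1 - w*q^(k+1) ≠ 0) :
    Summable (ltm q d w) := by
  apply summable_of_rec (ltm q d w)
    (fun n => w * q^(2*n+3) * (w*q^(2*n+2) - d))
    (fun n => (1 - w*q^(2*n+3))*(1 - w*q^(2*n+4)))
  · intro n
    have h2 := hw (2*n+2); rw [show 2*n+2+1 = 2*n+3 by omega] at h2
    have h3 := hw (2*n+3); rw [show 2*n+3+1 = 2*n+4 by omega] at h3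
    exact mul_ne_zero h2 h3
  · exact rec_ltm q d w hw
  · have t1 : Filter.Tendsto (fun n : ℕ => w*q^(2*n+3)) Filter.atTop (nhds 0) := by
      simpa using (tpow2j q hq 3).const_mul w
    have t2 : Filter.Tendsto (fun n : ℕ => w*q^(2*n+2) - d) Filter.atTop (nhds (-d)) := by
      simpa using ((tpow2j q hq 2).const_mul w).sub_const d
    simpa using t1.mul t2
  · have t1 : Filter.Tendsto (fun n : ℕ => 1 - w*q^(2*n+3)) Filter.atTop (nhds 1) := by
      simpa using tendsto_const_nhds.sub ((tpow2j q hq 3).const_mul w)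
    have t2 : Filter.Tendsto (fun n : ℕ => 1 - w*q^(2*n+4)) Filter.atTop (nhds 1) := by
      simpa using tendsto_const_nhds.sub ((tpow2j q hq 4).const_mul w)
    simpa using t1.mul t2

end Summability

section FE
variable (q d w : ℂ)

lemma FEpsi (hq : ‖q‖ < 1) (hw : ∀ k : ℕ, 1 - w*q^(k+1) ≠ 0) :
    (1 - w*q)*(1 - w*q^2) * ∑' n, rtm q d w n
      = w*q + w*q*(w*q^2 - d) * ∑' n, rtm q d (w*q^2) n := by
  have hw2 := hw_shift q w hw
  have Sr := summable_rtm q d w hq hw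
  have Sr2 := summable_rtm q d (w*q^2) hq hw2
  have Su := summable_utm q d w hq hw
  set C : ℂ := (1 - w*q)*(1 - w*q^2) with hC
  have hA : Summable (fun m => (1 - d*q^(m+1)) * utm q d w m) := by
    refine Summable.congr (((summable_nat_add_iff 1).2 Sr).mul_left C) ?_
    intro m; exact fer_b q d w hw m
  have hB : Summable (fun m => w*q*(w*q^2 - d) * rtm q d (w*q^2) m) :=
    Sr2.mul_left _
  have key : (∑' m, (1 - d*q^(m+1)) * utm q d w m)
      - (∑' m, w*q*(w*q^2 - d) * rtm q d (w*q^2) m) = utm q d w 0 := by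
    rw [← Summable.tsum_sub hA hB]
    rw [tsum_congr (fun m => fer_d q d w hw m)]
    exact tsum_telescope _ Su
  have expand : C * ∑' n, rtm q d w n
      = (w*q - utm q d w 0) + ∑' m, (1 - d*q^(m+1)) * utm q d w m := by
    rw [Summable.tsum_eq_zero_add Sr, mul_add, fer_a q d w hw]
    congr 1
    rw [← tsum_mul_left]
    exact tsum_congr (fun m => fer_b q d w hw m)
  rw [expand, ← tsum_mul_left]
  linear_combination key

lemma FEphi (hq : ‖q‖ < 1) (hw : ∀ k : ℕ, 1 - w*q^(k+1) ≠ 0) :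
    (1 - w*q)*(1 - w*q^2) * ∑' n, ltm q d w n
      = w*q + w*q*(w*q^2 - d) * ∑' n, ltm q d (w*q^2) n := by
  have Sl := summable_ltm q d w hq hw
  rw [Summable.tsum_eq_zero_add Sl, mul_add, ltm_zero q d w hw]
  congr 1
  rw [← tsum_mul_left, ← tsum_mul_left]
  exact tsum_congr (fun n => ltm_shift q d w hw n)

end FE
noncomputable def del (d : ℂ) : ℝ := min (1/2) (1/(8*(1+‖d‖)))

section Bounds
variable (q d w : ℂ)

lemma del_pos : 0 < del d := by
  apply lt_min (by norm_num)
  positivity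

lemma del_le_half : del d ≤ 1/2 := min_le_left _ _

lemma del_mul : (1+‖d‖) * del d ≤ 1/8 := by
  have h1 : (0:ℝ) < 1+‖d‖ := by positivity
  have h2 : del d ≤ 1/(8*(1+‖d‖)) := min_le_right _ _
  calc (1+‖d‖) * del d ≤ (1+‖d‖) * (1/(8*(1+‖d‖))) :=
        mul_le_mul_of_nonneg_left h2 h1.le
    _ = 1/8 := by field_simp

lemma lbfac (hq : ‖q‖ < 1) (hsmall : ‖w‖ ≤ 1/2) (j : ℕ) :
    1/2 ≤ ‖1 - w*q^j‖ := by
  have h1 : ‖w*q^j‖ ≤ 1/2 := by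
    rw [norm_mul, norm_pow]
    calc ‖w‖ * ‖q‖^j ≤ ‖w‖ * 1 :=
          mul_le_mul_of_nonneg_left (pow_le_one₀ (norm_nonneg q) hq.le) (norm_nonneg w)
      _ ≤ 1/2 := by rwa [mul_one]
  calc (1/2 : ℝ) = 1 - 1/2 := by norm_num
    _ ≤ ‖(1:ℂ)‖ - ‖w*q^j‖ := by rw [norm_one]; linarith
    _ ≤ ‖1 - w*q^j‖ := norm_sub_norm_le _ _

lemma ubfacd (hq : ‖q‖ < 1) (j : ℕ) : ‖1 - d*q^j‖ ≤ 1 + ‖d‖ := by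
  calc ‖1 - d*q^j‖ ≤ ‖(1:ℂ)‖ + ‖d*q^j‖ := norm_sub_le _ _
    _ = 1 + ‖d‖*‖q‖^j := by rw [norm_one, norm_mul, norm_pow]
    _ ≤ 1 + ‖d‖*1 := by
        have := pow_le_one₀ (norm_nonneg q) hq.le (n := j)
        have := mul_le_mul_of_nonneg_left this (norm_nonneg d)
        linarith
    _ = 1 + ‖d‖ := by ring

lemma psi_w_bound (hq : ‖q‖ < 1) (hw : ∀ k : ℕ, 1 - w*q^(k+1) ≠ 0)
    (hsmall : ‖w‖ ≤ del d) : ‖∑' n, rtm q d w n‖ ≤ 4*‖w‖ := by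
  have hwhalf : ‖w‖ ≤ 1/2 := hsmall.trans (del_le_half d)
  have hb : ∀ n : ℕ, (1 - w*q^(n+2)) ≠ 0 := fun n => by
    have := hw (n+1); rwa [show n+1+1 = n+2 by omega] at this
  have hhalf : ∀ n : ℕ, ‖(1 - d*q^(n+1)) * (w * q^(n+2))‖
      ≤ (1/2) * ‖1 - w*q^(n+2)‖ := by
    intro n
    have h1 : ‖(1 - d*q^(n+1)) * (w * q^(n+2))‖ ≤ (1+‖d‖) * ‖w‖ := by
      rw [norm_mul, norm_mul, norm_pow]
      calc ‖1 - d*q^(n+1)‖ * (‖w‖ * ‖q‖^(n+2))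
          ≤ (1+‖d‖) * (‖w‖ * ‖q‖^(n+2)) := by
            apply mul_le_mul_of_nonneg_right (ubfacd q d hq (n+1))
            positivity
        _ ≤ (1+‖d‖) * (‖w‖ * 1) := by
            apply mul_le_mul_of_nonneg_left _ (by positivity)
            exact mul_le_mul_of_nonneg_left (pow_le_one₀ (norm_nonneg q) hq.le) (norm_nonneg w)
        _ = (1+‖d‖) * ‖w‖ := by ring
    have h2 : (1+‖d‖) * ‖w‖ ≤ 1/8 := by
      calc (1+‖d‖) * ‖w‖ ≤ (1+‖d‖) * del d :=
            mul_le_mul_of_nonneg_left hsmall (by positivity)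
        _ ≤ 1/8 := del_mul d
    have h3 := lbfac q w hq hwhalf (n+2)
    linarith
  have hn := norm_le_of_rec (rtm q d w) _ _ hb (rec_rtm q d w hw) hhalf
  have ht := norm_tsum_le_of_half (rtm q d w) hn
  have h0 : ‖rtm q d w 0‖ ≤ 2*‖w‖ := by
    have e : rtm q d w 0 = w*q/(1 - w*q^(0+1)) := by
      unfold rtm; norm_num
    rw [e, norm_div, norm_mul]
    have h4 := lbfac q w hq hwhalf 1
    rw [show (0:ℕ)+1 = 1 by omega]
    have h5 : ‖w‖ * ‖q‖ ≤ ‖w‖ :=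
      mul_le_of_le_one_right (norm_nonneg w) (by simpa using pow_le_one₀ (norm_nonneg q) hq.le (n:=1))
    calc ‖w‖*‖q‖/‖1 - w*q^1‖ ≤ ‖w‖/(1/2) := by
          apply div_le_div₀ (norm_nonneg w) (by simpa using h5) (by norm_num) h4
      _ = 2*‖w‖ := by ring
  linarith

lemma phi_w_bound (hq : ‖q‖ < 1) (hw : ∀ k : ℕ, 1 - w*q^(k+1) ≠ 0)
    (hsmall : ‖w‖ ≤ del d) : ‖∑' n, ltm q d w n‖ ≤ 8*‖w‖ := by
  have hwhalf : ‖w‖ ≤ 1/2 := hsmall.trans (del_le_half d)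
  have hb : ∀ n : ℕ, (1 - w*q^(2*n+3))*(1 - w*q^(2*n+4)) ≠ 0 := fun n => by
    have h2 := hw (2*n+2); rw [show 2*n+2+1 = 2*n+3 by omega] at h2
    have h3 := hw (2*n+3); rw [show 2*n+3+1 = 2*n+4 by omega] at h3
    exact mul_ne_zero h2 h3
  have hhalf : ∀ n : ℕ, ‖w * q^(2*n+3) * (w*q^(2*n+2) - d)‖
      ≤ (1/2) * ‖(1 - w*q^(2*n+3))*(1 - w*q^(2*n+4))‖ := by
    intro n
    have h1 : ‖w * q^(2*n+3) * (w*q^(2*n+2) - d)‖ ≤ ‖w‖ * (1+‖d‖) := by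
      rw [norm_mul, norm_mul, norm_pow]
      have hp : ‖q‖^(2*n+3) ≤ 1 := pow_le_one₀ (norm_nonneg q) hq.le
      have hs : ‖w*q^(2*n+2) - d‖ ≤ 1+‖d‖ := by
        calc ‖w*q^(2*n+2) - d‖ ≤ ‖w*q^(2*n+2)‖ + ‖d‖ := norm_sub_le _ _
          _ ≤ 1 + ‖d‖ := by
              have : ‖w*q^(2*n+2)‖ ≤ ‖w‖ := by
                rw [norm_mul, norm_pow]
                exact mul_le_of_le_one_right (norm_nonneg w)
                  (pow_le_one₀ (norm_nonneg q) hq.le)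
              have hw1 : ‖w‖ ≤ 1 := hwhalf.trans (by norm_num)
              linarith
      calc ‖w‖ * ‖q‖^(2*n+3) * ‖w*q^(2*n+2) - d‖
          ≤ ‖w‖ * 1 * (1+‖d‖) := by
            apply mul_le_mul _ hs (norm_nonneg _) (by positivity)
            exact mul_le_mul_of_nonneg_left hp (norm_nonneg w)
        _ = ‖w‖ * (1+‖d‖) := by ring
    have h2 : ‖w‖ * (1+‖d‖) ≤ 1/8 := by
      calc ‖w‖ * (1+‖d‖) = (1+‖d‖) * ‖w‖ := by ring
        _ ≤ (1+‖d‖) * del d := mul_le_mul_of_nonneg_left hsmall (by positivity)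
        _ ≤ 1/8 := del_mul d
    have h3 := lbfac q w hq hwhalf (2*n+3)
    have h4 := lbfac q w hq hwhalf (2*n+4)
    rw [show ‖(1 - w*q^(2*n+3))*(1 - w*q^(2*n+4))‖
      = ‖1 - w*q^(2*n+3)‖*‖1 - w*q^(2*n+4)‖ from norm_mul _ _]
    nlinarith [norm_nonneg (1 - w*q^(2*n+3)), norm_nonneg (1 - w*q^(2*n+4))]
  have hn := norm_le_of_rec (ltm q d w) _ _ hb (rec_ltm q d w hw) hhalf
  have ht := norm_tsum_le_of_half (ltm q d w) hn
  have hq1 : (1 - w*q) ≠ 0 := by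
    have := hw 0; rwa [show (0:ℕ)+1 = 1 by omega, pow_one] at this
  have hq2 : (1 - w*q^2) ≠ 0 := by
    have := hw 1; rwa [show (1:ℕ)+1 = 2 by omega] at this
  have h0 : ‖ltm q d w 0‖ ≤ 4*‖w‖ := by
    have e : ltm q d w 0 = w*q/((1 - w*q)*(1 - w*q^2)) := by
      have h := ltm_zero q d w hw
      field_simp at h ⊢
      linear_combination h
    rw [e, norm_div, norm_mul, norm_mul]
    have h3 := lbfac q w hq hwhalf 1
    have h4 := lbfac q w hq hwhalf 2
    rw [pow_one] at h3
    have h5 : ‖w‖ * ‖q‖ ≤ ‖w‖ :=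
      mul_le_of_le_one_right (norm_nonneg w) (by simpa using pow_le_one₀ (norm_nonneg q) hq.le (n:=1))
    have h6 : (1/4 : ℝ) ≤ ‖1 - w*q‖ * ‖1 - w*q^2‖ := by nlinarith
    calc ‖w‖*‖q‖/(‖1 - w*q‖*‖1 - w*q^2‖) ≤ ‖w‖/(1/4) := by
          apply div_le_div₀ (norm_nonneg w) (by simpa using h5) (by norm_num) h6
      _ = 4*‖w‖ := by ring
  linarith

lemma cf_bound (hq : ‖q‖ < 1) (hsmall : ‖w‖ ≤ del d) : ‖cfm q d w‖ ≤ 1/2 := by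
  have hwhalf : ‖w‖ ≤ 1/2 := hsmall.trans (del_le_half d)
  unfold cfm
  rw [norm_div, norm_mul, norm_mul, norm_mul]
  have hp1 : ‖q‖ ≤ 1 := hq.le
  have hs : ‖w*q^2 - d‖ ≤ 1+‖d‖ := by
    calc ‖w*q^2 - d‖ ≤ ‖w*q^2‖ + ‖d‖ := norm_sub_le _ _
      _ ≤ 1 + ‖d‖ := by
          have : ‖w*q^2‖ ≤ ‖w‖ := by
            rw [norm_mul, norm_pow]
            exact mul_le_of_le_one_right (norm_nonneg w) (pow_le_one₀ (norm_nonneg q) hq.le)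
          have hw1 : ‖w‖ ≤ 1 := hwhalf.trans (by norm_num)
          linarith
  have h1 : ‖w‖ * ‖q‖ * ‖w*q^2 - d‖ ≤ ‖w‖ * (1+‖d‖) := by
    have := mul_le_of_le_one_right (norm_nonneg w) hp1
    nlinarith [norm_nonneg w, norm_nonneg (w*q^2-d)]
  have h2 : ‖w‖ * (1+‖d‖) ≤ 1/8 := by
    calc ‖w‖ * (1+‖d‖) = (1+‖d‖) * ‖w‖ := by ring
      _ ≤ (1+‖d‖) * del d := mul_le_mul_of_nonneg_left hsmall (by positivity)
      _ ≤ 1/8 := del_mul d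
  have h3 := lbfac q w hq hwhalf 1
  have h4 := lbfac q w hq hwhalf 2
  rw [pow_one] at h3
  have h6 : (1/4 : ℝ) ≤ ‖1 - w*q‖ * ‖1 - w*q^2‖ := by nlinarith
  calc ‖w‖*‖q‖*‖w*q^2 - d‖/(‖1 - w*q‖*‖1 - w*q^2‖) ≤ (1/8)/(1/4) := by
        apply div_le_div₀ (by norm_num) (by linarith) (by norm_num) h6
    _ = 1/2 := by norm_num
end Bounds
section Bridge
variable (q z d : ℂ)

lemma qPoch_shift (a : ℂ) (m : ℕ) :
    qPoch q (a*q) m = ∏ k ∈ Finset.range m, (1 - a*q^(k+1)) := by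
  unfold qPoch
  exact Finset.prod_congr rfl (fun k _ => by ring)

lemma bridge2 (n : ℕ) :
    qPoch q (d * q) n * z ^ (n + 1) * q ^ ((n + 1) * (n + 2) / 2) /
      qPoch q (z * q) (n + 1) = rtm q d z n := by
  rw [qPoch_shift, qPoch_shift]; rfl

lemma bridge1 (hd : d ≠ 0) (hzd : z ≠ d) (n : ℕ) :
    (-1 : ℂ) ^ (n + 1) * qPoch (q ^ 2) (z / d) (n + 1) * z ^ (n + 1) * d ^ (n + 1) *
        q ^ ((n + 1) * (n + 1)) /
      ((z - d) * qPoch q (z * q) (2 * (n + 1))) = ltm q d z n := by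
  have hzd' : z - d ≠ 0 := sub_ne_zero.2 hzd
  have key1 : qPoch (q^2) (z/d) (n+1) * d^(n+1)
      = (∏ k ∈ Finset.range n, (d - z*q^(2*k+2))) * (d - z) := by
    unfold qPoch
    have hpm := Finset.prod_mul_pow_card (s := Finset.range (n+1))
      (f := fun k => 1 - z/d*(q^2)^k) (b := d)
    rw [Finset.card_range] at hpm
    rw [hpm]
    have e : ∀ k, (1 - z/d*(q^2)^k) * d = d - z*q^(2*k) := fun k => by
      rw [← pow_mul]
      field_simp
    rw [Finset.prod_congr rfl (fun k _ => e k),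
      Finset.prod_range_succ' (fun k => d - z*q^(2*k)) n]
    have e3 : (∏ k ∈ Finset.range n, (d - z*q^(2*(k+1))))
        = ∏ k ∈ Finset.range n, (d - z*q^(2*k+2)) :=
      Finset.prod_congr rfl (fun k _ => by rw [show 2*(k+1) = 2*k+2 by omega])
    rw [e3]
    norm_num
  have key2 : (∏ k ∈ Finset.range n, (z*q^(2*k+2) - d))
      = (-1:ℂ)^n * ∏ k ∈ Finset.range n, (d - z*q^(2*k+2)) := by
    have e : ∀ k, z*q^(2*k+2) - d = (-1) * (d - z*q^(2*k+2)) := fun k => by ring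
    rw [Finset.prod_congr rfl (fun k _ => e k), Finset.prod_mul_distrib,
      Finset.prod_const, Finset.card_range]
  have e2 : (-1:ℂ)^(n+1) * qPoch (q^2) (z/d) (n+1) * z^(n+1) * d^(n+1) * q^((n+1)*(n+1))
      = (z-d) * (z^(n+1) * q^((n+1)*(n+1)) * ∏ k ∈ Finset.range n, (z*q^(2*k+2) - d)) := by
    calc (-1:ℂ)^(n+1) * qPoch (q^2) (z/d) (n+1) * z^(n+1) * d^(n+1) * q^((n+1)*(n+1))
        = (-1:ℂ)^(n+1) * (qPoch (q^2) (z/d) (n+1) * d^(n+1)) * z^(n+1) * q^((n+1)*(n+1)) := by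
          ring
      _ = (-1:ℂ)^(n+1) * ((∏ k ∈ Finset.range n, (d - z*q^(2*k+2))) * (d - z))
            * z^(n+1) * q^((n+1)*(n+1)) := by rw [key1]
      _ = (z-d) * (z^(n+1) * q^((n+1)*(n+1)) *
            ((-1:ℂ)^n * ∏ k ∈ Finset.range n, (d - z*q^(2*k+2)))) := by
          rw [pow_succ]; ring
      _ = (z-d) * (z^(n+1) * q^((n+1)*(n+1)) * ∏ k ∈ Finset.range n, (z*q^(2*k+2) - d)) := by
          rw [← key2]
  rw [e2, qPoch_shift]
  unfold ltm
  rw [mul_div_mul_left _ _ hzd']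

end Bridge
theorem stmt8 (q z d : ℂ) (hq : ‖q‖ < 1)
    (hd : d ≠ 0) (hzd : z ≠ d) (hdz : ‖d * z‖ < 1)
    (hz : ∀ k : ℕ, 1 - z * q ^ (k + 1) ≠ 0) :
    (∑' n : ℕ,
      (-1 : ℂ) ^ (n + 1) * qPoch (q ^ 2) (z / d) (n + 1) * z ^ (n + 1) * d ^ (n + 1) *
        q ^ ((n + 1) * (n + 1)) /
      ((z - d) * qPoch q (z * q) (2 * (n + 1))))
    = ∑' n : ℕ,
        qPoch q (d * q) n * z ^ (n + 1) * q ^ ((n + 1) * (n + 2) / 2) /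
          qPoch q (z * q) (n + 1) := by
  have hqn : ‖q‖ < 1 := hq
  -- nonvanishing along the orbit
  have hwN : ∀ N : ℕ, ∀ k : ℕ, 1 - (z*q^(2*N))*q^(k+1) ≠ 0 := by
    intro N k
    have := hz (2*N+k)
    rw [show 2*N+k+1 = 2*N+(k+1) by omega] at this
    rwa [show (z*q^(2*N))*q^(k+1) = z*q^(2*N+(k+1)) by rw [pow_add]; ring]
  -- the difference function along the orbit
  set F : ℕ → ℂ := fun N =>
    (∑' n, ltm q d (z*q^(2*N)) n) - (∑' n, rtm q d (z*q^(2*N)) n) with hF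
  -- one-step functional equation
  have step : ∀ N : ℕ, F N = cfm q d (z*q^(2*N)) * F (N+1) := by
    intro N
    have hw := hwN N
    have hq1 : (1 - (z*q^(2*N))*q) ≠ 0 := by
      have := hw 0; rwa [show (0:ℕ)+1 = 1 by omega, pow_one] at this
    have hq2 : (1 - (z*q^(2*N))*q^2) ≠ 0 := by
      have := hw 1; rwa [show (1:ℕ)+1 = 2 by omega] at this
    have e : (z*q^(2*N))*q^2 = z*q^(2*(N+1)) := by
      rw [show 2*(N+1) = 2*N+2 by omega, pow_add]; ring
    have h1 := FEphi q d (z*q^(2*N)) hqn hw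
    have h2 := FEpsi q d (z*q^(2*N)) hqn hw
    show (∑' n, ltm q d (z*q^(2*N)) n) - (∑' n, rtm q d (z*q^(2*N)) n)
        = cfm q d (z*q^(2*N)) *
          ((∑' n, ltm q d (z*q^(2*(N+1))) n) - (∑' n, rtm q d (z*q^(2*(N+1))) n))
    rw [← e]
    unfold cfm
    rw [div_mul_eq_mul_div, eq_div_iff (mul_ne_zero hq1 hq2)]
    linear_combination h1 - h2
  -- iterate
  have iter : ∀ N : ℕ, F 0 = (∏ k ∈ Finset.range N, cfm q d (z*q^(2*k))) * F N := by
    intro N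
    induction N with
    | zero => simp
    | succ N ih =>
      rw [ih, step N, Finset.prod_range_succ]
      ring
  -- the orbit tends to zero
  have tz : Filter.Tendsto (fun N : ℕ => z*q^(2*N)) Filter.atTop (nhds 0) := by
    have := (tpow2j q hqn 0).const_mul z
    simpa using this
  have tzn : Filter.Tendsto (fun N : ℕ => ‖z*q^(2*N)‖) Filter.atTop (nhds 0) := by
    simpa using tz.norm
  -- eventually small
  have hev : ∀ᶠ N in Filter.atTop, ‖z*q^(2*N)‖ ≤ del d := by
    have := tzn.eventually (eventually_lt_nhds (del_pos d))
    filter_upwards [this] with N hN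
    exact hN.le
  obtain ⟨K, hK⟩ := Filter.eventually_atTop.1 hev
  -- product norm bound
  have Pb : ∀ N, K ≤ N →
      ‖∏ k ∈ Finset.range N, cfm q d (z*q^(2*k))‖
        ≤ ‖∏ k ∈ Finset.range K, cfm q d (z*q^(2*k))‖ := by
    intro N hN
    induction N, hN using Nat.le_induction with
    | base => exact le_rfl
    | succ N hN ih =>
      rw [Finset.prod_range_succ, norm_mul]
      have hcf : ‖cfm q d (z*q^(2*N))‖ ≤ 1/2 := cf_bound q d _ hqn (hK N hN)
      calc ‖∏ k ∈ Finset.range N, cfm q d (z*q^(2*k))‖ * ‖cfm q d (z*q^(2*N))‖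
          ≤ ‖∏ k ∈ Finset.range N, cfm q d (z*q^(2*k))‖ * 1 :=
            mul_le_mul_of_nonneg_left (hcf.trans (by norm_num)) (norm_nonneg _)
        _ = ‖∏ k ∈ Finset.range N, cfm q d (z*q^(2*k))‖ := mul_one _
        _ ≤ _ := ih
  set CK : ℝ := ‖∏ k ∈ Finset.range K, cfm q d (z*q^(2*k))‖ with hCK
  -- F N eventually bounded by 12 * ‖z_N‖
  have Fb : ∀ N, K ≤ N → ‖F N‖ ≤ 12 * ‖z*q^(2*N)‖ := by
    intro N hN
    have hsmall := hK N hN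
    have h1 := phi_w_bound q d (z*q^(2*N)) hqn (hwN N) hsmall
    have h2 := psi_w_bound q d (z*q^(2*N)) hqn (hwN N) hsmall
    calc ‖F N‖ ≤ ‖∑' n, ltm q d (z*q^(2*N)) n‖ + ‖∑' n, rtm q d (z*q^(2*N)) n‖ :=
          norm_sub_le _ _
      _ ≤ 12 * ‖z*q^(2*N)‖ := by linarith
  -- conclude F 0 = 0
  have hF0 : F 0 = 0 := by
    have hle : ∀ᶠ N in Filter.atTop, ‖F 0‖ ≤ CK * (12 * ‖z*q^(2*N)‖) := by
      rw [Filter.eventually_atTop]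
      refine ⟨K, fun N hN => ?_⟩
      rw [iter N, norm_mul]
      calc ‖∏ k ∈ Finset.range N, cfm q d (z*q^(2*k))‖ * ‖F N‖
          ≤ CK * ‖F N‖ := mul_le_mul_of_nonneg_right (Pb N hN) (norm_nonneg _)
        _ ≤ CK * (12 * ‖z*q^(2*N)‖) := by
            apply mul_le_mul_of_nonneg_left (Fb N hN)
            rw [hCK]; exact norm_nonneg _
    have hlim : Filter.Tendsto (fun N : ℕ => CK * (12 * ‖z*q^(2*N)‖))
        Filter.atTop (nhds 0) := by
      have := (tzn.const_mul 12).const_mul CK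
      simpa using this
    have : ‖F 0‖ ≤ 0 := ge_of_tendsto hlim hle
    have := le_antisymm this (norm_nonneg _)
    exact norm_eq_zero.1 this
  -- translate back
  have hz0 : z*q^(2*0) = z := by norm_num
  have e1 : (∑' n : ℕ,
      (-1 : ℂ) ^ (n + 1) * qPoch (q ^ 2) (z / d) (n + 1) * z ^ (n + 1) * d ^ (n + 1) *
        q ^ ((n + 1) * (n + 1)) /
      ((z - d) * qPoch q (z * q) (2 * (n + 1))))
      = ∑' n, ltm q d z n :=
    tsum_congr (fun n => bridge1 q z d hd hzd n)
  have e2 : (∑' n : ℕ,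
        qPoch q (d * q) n * z ^ (n + 1) * q ^ ((n + 1) * (n + 2) / 2) /
          qPoch q (z * q) (n + 1))
      = ∑' n, rtm q d z n :=
    tsum_congr (fun n => bridge2 q z d n)
  rw [e1, e2]
  have hfinal : (∑' n, ltm q d (z*q^(2*0)) n) - (∑' n, rtm q d (z*q^(2*0)) n) = 0 := hF0
  rw [hz0] at hfinal
  exact sub_eq_zero.1 hfinal
end

section
/- Let N ≥ 1 be a natural number and let q, a, b, e ∈ ℂ with |q| < 1, a ≠ 0, e ≠ 0, and suppose 1 − b q^k ≠ 0 for 1 ≤ k ≤ N. Then (−aq)_N (be)_N / (bq)_N = ∑_{n=0}^N [N,n]_q (−1)^n (−ae)_{N−n} (−b/a)_n (q/e)_n (ae)^n / (bq)_n. -/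
open Finset

noncomputable def Tm (q a b e : ℂ) (N n : ℕ) : ℂ :=
  qBinom q N n * (-1 : ℂ) ^ n * qPoch q (-(a * e)) (N - n) * qPoch q (-(b / a)) n *
    qPoch q (q / e) n * (a * e) ^ n / qPoch q (b * q) n

lemma qPoch_zero (q a : ℂ) : qPoch q a 0 = 1 := by simp [qPoch]

lemma qPoch_succ (q a : ℂ) (n : ℕ) : qPoch q a (n+1) = qPoch q a n * (1 - a * q ^ n) :=
  Finset.prod_range_succ _ n

lemma qPoch_succ' (q a : ℂ) (n : ℕ) : qPoch q a (n+1) = (1 - a) * qPoch q (a*q) n := by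
  rw [qPoch, Finset.prod_range_succ']
  simp only [pow_zero, mul_one]
  rw [mul_comm, qPoch]
  congr 1
  exact Finset.prod_congr rfl fun k _ => by ring

lemma one_sub_pow_ne (q : ℂ) (hq : ‖q‖ < 1) (k : ℕ) (hk : 1 ≤ k) :
    (1:ℂ) - q ^ k ≠ 0 := by
  intro h
  have h1 : q ^ k = 1 := by linear_combination -h
  have h2 : ‖q ^ k‖ < 1 := by
    rw [norm_pow]
    calc ‖q‖ ^ k ≤ ‖q‖ ^ 1 :=
          pow_le_pow_of_le_one (norm_nonneg q) hq.le hk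
      _ = ‖q‖ := pow_one _
      _ < 1 := hq
  rw [h1] at h2
  simp at h2

lemma qq_ne (q : ℂ) (hq : ‖q‖ < 1) (m : ℕ) : qPoch q q m ≠ 0 := by
  rw [qPoch]
  refine Finset.prod_ne_zero_iff.mpr fun k _ => ?_
  have := one_sub_pow_ne q hq (k+1) (by omega)
  rwa [pow_succ'] at this

lemma qbq_ne (q b : ℂ) (m : ℕ) (hb : ∀ k : ℕ, 1 ≤ k → k ≤ m → 1 - b * q ^ k ≠ 0) :
    qPoch q (b*q) m ≠ 0 := by
  rw [qPoch]
  refine Finset.prod_ne_zero_iff.mpr fun k hk => ?_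
  have hkm := Finset.mem_range.mp hk
  have := hb (k+1) (by omega) (by omega)
  rwa [show (1:ℂ) - b * q^(k+1) = 1 - b*q*q^k from by ring] at this

lemma qbqq_ne (q b : ℂ) (m : ℕ) (hb : ∀ k : ℕ, 1 ≤ k → k ≤ m+1 → 1 - b * q ^ k ≠ 0) :
    qPoch q (b*q*q) m ≠ 0 := by
  rw [qPoch]
  refine Finset.prod_ne_zero_iff.mpr fun k hk => ?_
  have hkm := Finset.mem_range.mp hk
  have := hb (k+2) (by omega) (by omega)
  rwa [show (1:ℂ) - b * q^(k+2) = 1 - b*q*q*q^k from by ring] at this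

lemma qBinom_zero (q : ℂ) (hq : ‖q‖ < 1) (N : ℕ) : qBinom q N 0 = 1 := by
  rw [qBinom, Nat.sub_zero, qPoch_zero, one_mul, div_self (qq_ne q hq N)]

lemma qBinom_self (q : ℂ) (hq : ‖q‖ < 1) (N : ℕ) : qBinom q N N = 1 := by
  rw [qBinom, Nat.sub_self, qPoch_zero, mul_one, div_self (qq_ne q hq N)]

section TR
variable (q a b e : ℂ) (n m : ℕ)

noncomputable def Dall : ℂ :=
  qPoch q q n * (1-q*q^n) * (qPoch q q m * (1-q*q^m)) * ((1-b*q) * qPoch q (b*q*q) n)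
    * (1-b*q) * a * e

noncomputable def X1 : ℂ :=
  qPoch q q (n+m+1) * (1-q*q^(n+m+1)) * (-1:ℂ)^(n+1) * (1+a*e) * qPoch q (-(a*(e*q))) m
    * (a+b) * qPoch q (-(b*q/a)) n * qPoch q (q/e) n * (e-q*q^n) * (a*e)^(n+1) * (1-b*q)

noncomputable def X2 : ℂ :=
  qPoch q q (n+m+1) * (-1:ℂ)^(n+1) * qPoch q (-(a*(e*q))) m * (a+b) * qPoch q (-(b*q/a)) n
    * (e-1) * qPoch q (q/e) n * (a*(e*q))^(n+1) * (1-q*q^m) * (1-b*q)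

noncomputable def X3 : ℂ :=
  qPoch q q (n+m+1) * (-1:ℂ)^n * (1+a*e) * qPoch q (-(a*(e*q))) m * qPoch q (-(b*q/a)) n
    * qPoch q (q/e) n * (a*e)^n * (1-q*q^n) * (1-b*q) * (1-b*q) * a * e

end TR

lemma frac_combine (al b0 w X1 X2 X3 D : ℂ) (hw : w ≠ 0) (hD : D ≠ 0)
    (hnum : X1 * w = al * X2 * w + b0 * X3) :
    X1 / D = al * (X2 / D) + b0 / w * (X3 / D) := by
  field_simp
  linear_combination hnum

section PfTR
variable (q a b e : ℂ) (hq : ‖q‖ < 1) (hq0 : q ≠ 0) (ha : a ≠ 0) (he : e ≠ 0)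
  (n m : ℕ) (hb : ∀ k : ℕ, 1 ≤ k → k ≤ n + 2 → 1 - b * q ^ k ≠ 0)

include hq hq0 ha he hb in
set_option maxHeartbeats 3000000 in
lemma K1 : Tm q a b e (n+m+2) (n+1) = X1 q a b e n m / Dall q a b e n m := by
  have hsub1 : n + m + 2 - (n+1) = m + 1 := by omega
  simp only [Tm, qBinom, X1, Dall, hsub1]
  rw [show n+m+2 = (n+m+1)+1 from rfl]
  rw [qPoch_succ q q (n+m+1), qPoch_succ q q n, qPoch_succ q q m]
  rw [qPoch_succ' q (-(a*e)) m, show -(a*e)*q = -(a*(e*q)) from by ring]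
  rw [qPoch_succ' q (-(b/a)) n, show -(b/a)*q = -(b*q/a) from by ring]
  rw [qPoch_succ q (q/e) n]
  rw [qPoch_succ' q (b*q) n]
  have hB := qq_ne q hq n
  have hC := qq_ne q hq m
  have hG : qPoch q (b*q*q) n ≠ 0 := qbqq_ne q b n fun k h1 h2 => hb k h1 (by omega)
  have hu : (1:ℂ) - q*q^n ≠ 0 := by
    have := one_sub_pow_ne q hq (n+1) (by omega); rwa [pow_succ'] at this
  have hv : (1:ℂ) - q*q^m ≠ 0 := by
    have := one_sub_pow_ne q hq (m+1) (by omega); rwa [pow_succ'] at this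
  have hw : (1:ℂ) - b*q ≠ 0 := by
    have := hb 1 le_rfl (by omega); rwa [pow_one] at this
  set A := qPoch q q (n+m+1)
  set B := qPoch q q n
  set C := qPoch q q m
  set D := qPoch q (-(a*(e*q))) m
  set E5 := qPoch q (-(b*q/a)) n
  set F := qPoch q (q/e) n
  set G := qPoch q (b*q*q) n
  set u := (1:ℂ) - q*q^n
  set v := (1:ℂ) - q*q^m
  set w := (1:ℂ) - b*q
  clear_value A B C D E5 F G u v w
  have hDall : B * u * (C * v) * (w * G) * w * a * e ≠ 0 := by
    repeat' apply mul_ne_zero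
    all_goals assumption
  rw [div_eq_div_iff (mul_ne_zero hw hG) hDall]
  rw [show (1:ℂ) - -(b/a) = (a+b)/a from by field_simp; ring]
  rw [show (1:ℂ) - q/e*q^n = (e - q*q^n)/e from by field_simp]
  simp only [div_mul_eq_mul_div, mul_div_assoc', div_div]
  rw [div_eq_iff (by repeat' apply mul_ne_zero
                     all_goals assumption : B * u * (C * v) * a * e ≠ 0)]
  ring

include hq hq0 ha he hb in
set_option maxHeartbeats 3000000 in
lemma K2 : Tm q a b (e*q) (n+m+1) (n+1) = X2 q a b e n m / Dall q a b e n m := by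
  have hsub2 : n + m + 1 - (n+1) = m := by omega
  simp only [Tm, qBinom, X2, Dall, hsub2]
  rw [qPoch_succ q q n]
  rw [qPoch_succ' q (-(b/a)) n, show -(b/a)*q = -(b*q/a) from by ring]
  rw [qPoch_succ' q (q/(e*q)) n, show q/(e*q)*q = q/e from by field_simp]
  rw [qPoch_succ' q (b*q) n]
  have hB := qq_ne q hq n
  have hC := qq_ne q hq m
  have hG : qPoch q (b*q*q) n ≠ 0 := qbqq_ne q b n fun k h1 h2 => hb k h1 (by omega)
  have hu : (1:ℂ) - q*q^n ≠ 0 := by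
    have := one_sub_pow_ne q hq (n+1) (by omega); rwa [pow_succ'] at this
  have hv : (1:ℂ) - q*q^m ≠ 0 := by
    have := one_sub_pow_ne q hq (m+1) (by omega); rwa [pow_succ'] at this
  have hw : (1:ℂ) - b*q ≠ 0 := by
    have := hb 1 le_rfl (by omega); rwa [pow_one] at this
  set A := qPoch q q (n+m+1)
  set B := qPoch q q n
  set C := qPoch q q m
  set D := qPoch q (-(a*(e*q))) m
  set E5 := qPoch q (-(b*q/a)) n
  set F := qPoch q (q/e) n
  set G := qPoch q (b*q*q) n
  set u := (1:ℂ) - q*q^n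
  set v := (1:ℂ) - q*q^m
  set w := (1:ℂ) - b*q
  clear_value A B C D E5 F G u v w
  have hDall : B * u * (C * v) * (w * G) * w * a * e ≠ 0 := by
    repeat' apply mul_ne_zero
    all_goals assumption
  rw [div_eq_div_iff (mul_ne_zero hw hG) hDall]
  rw [show (1:ℂ) - -(b/a) = (a+b)/a from by field_simp; ring]
  rw [show (1:ℂ) - q/(e*q) = (e-1)/e from by field_simp]
  simp only [div_mul_eq_mul_div, mul_div_assoc', div_div]
  rw [div_eq_iff (by repeat' apply mul_ne_zero
                     all_goals assumption : B * u * C * a * e ≠ 0)]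
  ring

include hq hq0 ha he hb in
set_option maxHeartbeats 3000000 in
lemma K3 : Tm q a (b*q) e (n+m+1) n = X3 q a b e n m / Dall q a b e n m := by
  have hsub3 : n + m + 1 - n = m + 1 := by omega
  simp only [Tm, qBinom, X3, Dall, hsub3]
  rw [qPoch_succ q q m]
  rw [qPoch_succ' q (-(a*e)) m, show -(a*e)*q = -(a*(e*q)) from by ring]
  have hB := qq_ne q hq n
  have hC := qq_ne q hq m
  have hG : qPoch q (b*q*q) n ≠ 0 := qbqq_ne q b n fun k h1 h2 => hb k h1 (by omega)
  have hu : (1:ℂ) - q*q^n ≠ 0 := by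
    have := one_sub_pow_ne q hq (n+1) (by omega); rwa [pow_succ'] at this
  have hv : (1:ℂ) - q*q^m ≠ 0 := by
    have := one_sub_pow_ne q hq (m+1) (by omega); rwa [pow_succ'] at this
  have hw : (1:ℂ) - b*q ≠ 0 := by
    have := hb 1 le_rfl (by omega); rwa [pow_one] at this
  set A := qPoch q q (n+m+1)
  set B := qPoch q q n
  set C := qPoch q q m
  set D := qPoch q (-(a*(e*q))) m
  set E5 := qPoch q (-(b*q/a)) n
  set F := qPoch q (q/e) n
  set G := qPoch q (b*q*q) n
  set u := (1:ℂ) - q*q^n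
  set v := (1:ℂ) - q*q^m
  set w := (1:ℂ) - b*q
  clear_value A B C D E5 F G u v w
  have hDall : B * u * (C * v) * (w * G) * w * a * e ≠ 0 := by
    repeat' apply mul_ne_zero
    all_goals assumption
  rw [div_eq_div_iff hG hDall]
  rw [show (1:ℂ) - -(a*e) = 1+a*e from by ring]
  simp only [div_mul_eq_mul_div, mul_div_assoc', div_div]
  rw [div_eq_iff (by repeat' apply mul_ne_zero
                     all_goals assumption : B * (C * v) ≠ 0)]
  ring

include hq hq0 ha he hb in
lemma term_rec :
    Tm q a b e (n+m+2) (n+1)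
      = (1 + a*e) * Tm q a b (e*q) (n+m+1) (n+1)
        + (a+b) * (q^(n+m+2) - e) / (1 - b*q) * Tm q a (b*q) e (n+m+1) n := by
  have hB := qq_ne q hq n
  have hC := qq_ne q hq m
  have hG : qPoch q (b*q*q) n ≠ 0 := qbqq_ne q b n fun k h1 h2 => hb k h1 (by omega)
  have hu : (1:ℂ) - q*q^n ≠ 0 := by
    have := one_sub_pow_ne q hq (n+1) (by omega); rwa [pow_succ'] at this
  have hv : (1:ℂ) - q*q^m ≠ 0 := by
    have := one_sub_pow_ne q hq (m+1) (by omega); rwa [pow_succ'] at this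
  have hw : (1:ℂ) - b*q ≠ 0 := by
    have := hb 1 le_rfl (by omega); rwa [pow_one] at this
  have hDall : Dall q a b e n m ≠ 0 := by
    simp only [Dall]
    repeat' apply mul_ne_zero
    all_goals assumption
  rw [K1 q a b e hq hq0 ha he n m hb, K2 q a b e hq hq0 ha he n m hb,
      K3 q a b e hq hq0 ha he n m hb]
  refine frac_combine _ _ _ _ _ _ _ hw hDall ?_
  simp only [X1, X2, X3]
  ring
end PfTR

lemma lhs_rec (q a b e : ℂ) (hq : ‖q‖ < 1) (N : ℕ)
    (hb : ∀ k : ℕ, 1 ≤ k → k ≤ N+1 → 1 - b * q ^ k ≠ 0) :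
    qPoch q (-(a*q)) (N+1) * qPoch q (b*e) (N+1) / qPoch q (b*q) (N+1)
      = (1+a*e) * (qPoch q (-(a*q)) N * qPoch q (b*(e*q)) N / qPoch q (b*q) N)
        + (a+b) * (q^(N+1) - e) / (1-b*q)
            * (qPoch q (-(a*q)) N * qPoch q (b*q*e) N / qPoch q (b*q*q) N) := by
  have hK : qPoch q (b*q) N ≠ 0 := qbq_ne q b N fun k h1 h2 => hb k h1 (by omega)
  have hw : (1:ℂ) - b*q ≠ 0 := by
    have := hb 1 le_rfl (by omega); rwa [pow_one] at this
  have ht : (1:ℂ) - b*q*q^N ≠ 0 := by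
    have := hb (N+1) (by omega) le_rfl
    rwa [show (1:ℂ) - b*q^(N+1) = 1 - b*q*q^N from by ring] at this
  have hrel : qPoch q (b*q) N * (1 - b*q*q^N) = (1-b*q) * qPoch q (b*q*q) N := by
    rw [← qPoch_succ, qPoch_succ']
  have hGsub : qPoch q (b*q*q) N = qPoch q (b*q) N * (1 - b*q*q^N) / (1-b*q) := by
    rw [eq_div_iff hw]; linear_combination -hrel
  rw [qPoch_succ q (-(a*q)) N, qPoch_succ' q (b*e) N, show b*e*q = b*(e*q) from by ring,
      show b*q*e = b*(e*q) from by ring, qPoch_succ q (b*q) N, hGsub]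
  set P := qPoch q (-(a*q)) N
  set E := qPoch q (b*(e*q)) N
  set K := qPoch q (b*q) N
  clear_value P E K
  rw [div_div_eq_mul_div]
  have ht' : (1:ℂ) - q*q^N*b ≠ 0 := by
    rwa [show (1:ℂ) - q*q^N*b = 1 - b*q*q^N from by ring]
  have hw' : (1:ℂ) - q*b ≠ 0 := by
    rwa [show (1:ℂ) - q*b = 1 - b*q from by ring]
  field_simp
  ring

lemma edge0 (q a b e : ℂ) (hq : ‖q‖ < 1) (N : ℕ) :
    Tm q a b e (N+1) 0 = (1+a*e) * Tm q a b (e*q) N 0 := by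
  simp only [Tm, Nat.sub_zero, qBinom_zero q hq, pow_zero, mul_one, one_mul, qPoch_zero, div_one]
  rw [qPoch_succ' q (-(a*e)) N, show -(a*e)*q = -(a*(e*q)) from by ring]
  ring

lemma edgeN (q a b e : ℂ) (hq : ‖q‖ < 1) (ha : a ≠ 0) (he : e ≠ 0) (N : ℕ)
    (hb : ∀ k : ℕ, 1 ≤ k → k ≤ N+1 → 1 - b * q ^ k ≠ 0) :
    Tm q a b e (N+1) (N+1)
      = (a+b) * (q^(N+1) - e) / (1-b*q) * Tm q a (b*q) e N N := by
  simp only [Tm, Nat.sub_self, qBinom_self q hq, qPoch_zero, one_mul, mul_one]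
  rw [qPoch_succ' q (-(b/a)) N, show -(b/a)*q = -(b*q/a) from by ring,
      qPoch_succ q (q/e) N, qPoch_succ' q (b*q) N]
  have hw : (1:ℂ) - b*q ≠ 0 := by
    have := hb 1 le_rfl (by omega); rwa [pow_one] at this
  have hG : qPoch q (b*q*q) N ≠ 0 := qbqq_ne q b N hb
  set E5 := qPoch q (-(b*q/a)) N
  set F := qPoch q (q/e) N
  set G := qPoch q (b*q*q) N
  clear_value E5 F G
  rw [div_mul_div_comm]
  rw [div_eq_div_iff (mul_ne_zero hw hG) (mul_ne_zero hw hG)]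
  rw [show (1:ℂ) - -(b/a) = (a+b)/a from by field_simp; ring]
  rw [show (1:ℂ) - q/e*q^N = (e - q*q^N)/e from by field_simp]
  simp only [div_mul_eq_mul_div, mul_div_assoc', div_div]
  rw [div_eq_iff (mul_ne_zero ha he)]
  ring

lemma mainAux (q a : ℂ) (hq : ‖q‖ < 1) (hq0 : q ≠ 0) (ha : a ≠ 0) :
    ∀ N : ℕ, ∀ b e : ℂ, e ≠ 0 → (∀ k : ℕ, 1 ≤ k → k ≤ N → 1 - b * q ^ k ≠ 0) →
    qPoch q (-(a*q)) N * qPoch q (b*e) N / qPoch q (b*q) N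
      = ∑ n ∈ Finset.range (N+1), Tm q a b e N n := by
  intro N
  induction N with
  | zero =>
    intro b e he hb
    simp [Tm, qBinom, qPoch_zero]
  | succ N ih =>
    intro b e he hb
    have heq : e * q ≠ 0 := mul_ne_zero he hq0
    have hbq : ∀ k : ℕ, 1 ≤ k → k ≤ N → 1 - (b*q) * q ^ k ≠ 0 := by
      intro k h1 h2
      have := hb (k+1) (by omega) (by omega)
      rwa [show (1:ℂ) - b*q^(k+1) = 1 - (b*q)*q^k from by ring] at this
    have IH1 := ih b (e*q) heq (fun k h1 h2 => hb k h1 (by omega))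
    have IH2 := ih (b*q) e he hbq
    have hstep : ∀ i ∈ Finset.range N, Tm q a b e (N+1) (i+1)
        = (1+a*e) * Tm q a b (e*q) N (i+1)
          + (a+b) * (q^(N+1) - e) / (1-b*q) * Tm q a (b*q) e N i := by
      intro i hi
      have hiN : i < N := Finset.mem_range.mp hi
      have h := term_rec q a b e hq hq0 ha he i (N-1-i)
        (fun k h1 h2 => hb k h1 (by omega))
      rw [show i + (N-1-i) + 2 = N+1 from by omega,
          show i + (N-1-i) + 1 = N from by omega] at h
      exact h
    rw [Finset.sum_range_succ' (fun n => Tm q a b e (N+1) n) (N+1)]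
    rw [Finset.sum_range_succ (fun n => Tm q a b e (N+1) (n+1)) N]
    rw [Finset.sum_congr rfl hstep]
    rw [Finset.sum_add_distrib, ← Finset.mul_sum, ← Finset.mul_sum]
    have e1 : ∑ i ∈ Finset.range N, Tm q a b (e*q) N (i+1)
        = (∑ n ∈ Finset.range (N+1), Tm q a b (e*q) N n) - Tm q a b (e*q) N 0 := by
      rw [Finset.sum_range_succ' (fun n => Tm q a b (e*q) N n) N]; ring
    have e2 : ∑ i ∈ Finset.range N, Tm q a (b*q) e N i
        = (∑ n ∈ Finset.range (N+1), Tm q a (b*q) e N n) - Tm q a (b*q) e N N := by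
      rw [Finset.sum_range_succ (fun n => Tm q a (b*q) e N n) N]; ring
    rw [e1, e2, ← IH1, ← IH2, edge0 q a b e hq N, edgeN q a b e hq ha he N hb]
    rw [lhs_rec q a b e hq N hb]
    ring

lemma qPoch_q0 (x : ℂ) : ∀ k : ℕ, qPoch 0 x (k+1) = 1 - x := by
  intro k
  induction k with
  | zero => rw [qPoch_succ, qPoch_zero]; simp
  | succ k ihk => rw [qPoch_succ, ihk]; simp

lemma qPoch_q0_one (x : ℂ) : qPoch 0 x 1 = 1 - x := qPoch_q0 x 0

lemma h00 (k : ℕ) : qPoch 0 (0:ℂ) k = 1 := by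
  cases k with
  | zero => exact qPoch_zero 0 0
  | succ k => rw [qPoch_q0]; ring

lemma qBinom_q0 (N n : ℕ) : qBinom 0 N n = 1 := by
  simp [qBinom, h00]

lemma q0sum (a b e : ℂ) (ha : a ≠ 0) :
    ∀ N : ℕ, 1 ≤ N → ∑ n ∈ Finset.range (N+1), Tm 0 a b e N n = 1 - b*e := by
  intro N hN
  induction N, hN using Nat.le_induction with
  | base =>
    simp only [Finset.sum_range_succ, Finset.sum_range_zero, Tm, qBinom_q0, zero_div, mul_zero,
      h00, Nat.sub_zero, Nat.sub_self, qPoch_zero, qPoch_q0_one, one_mul, mul_one, div_one,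
      pow_zero, pow_one, zero_add]
    field_simp
    ring
  | succ N hN ihN =>
    have IH := ihN
    obtain ⟨M, rfl⟩ : ∃ M, N = M+1 := ⟨N-1, by omega⟩
    rw [Finset.sum_range_succ, Finset.sum_range_succ]
    have hagree : ∀ n ∈ Finset.range (M+1), Tm 0 a b e (M+1+1) n = Tm 0 a b e (M+1) n := by
      intro n hn
      have hnN := Finset.mem_range.mp hn
      simp only [Tm, qBinom_q0]
      rw [show M+1+1-n = (M-n)+1+1 from by omega, show M+1-n = (M-n)+1 from by omega,
        qPoch_q0, qPoch_q0]
    rw [Finset.sum_congr rfl hagree]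
    rw [Finset.sum_range_succ] at IH
    have hlast : Tm 0 a b e (M+1+1) (M+1) + Tm 0 a b e (M+1+1) (M+1+1)
        = Tm 0 a b e (M+1) (M+1) := by
      simp only [Tm, qBinom_q0, zero_div, mul_zero, h00, Nat.sub_self, qPoch_zero,
        one_mul, mul_one, div_one]
      rw [show M+1+1-(M+1) = 1 from by omega, qPoch_q0_one, qPoch_q0, qPoch_q0]
      ring
    linear_combination IH + hlast


theorem stmt10 (N : ℕ) (hN : 1 ≤ N) (q a b e : ℂ) (hq : ‖q‖ < 1)
    (ha : a ≠ 0) (he : e ≠ 0)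
    (hb : ∀ k : ℕ, 1 ≤ k → k ≤ N → 1 - b * q ^ k ≠ 0) :
    qPoch q (-(a * q)) N * qPoch q (b * e) N / qPoch q (b * q) N
    = ∑ n ∈ Finset.range (N + 1),
        qBinom q N n * (-1 : ℂ) ^ n * qPoch q (-(a * e)) (N - n) * qPoch q (-(b / a)) n *
          qPoch q (q / e) n * (a * e) ^ n / qPoch q (b * q) n := by
  rcases eq_or_ne q 0 with rfl | hq0
  · have hs := q0sum a b e ha N hN
    obtain ⟨M, rfl⟩ : ∃ M, N = M+1 := ⟨N-1, by omega⟩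
    conv_lhs => rw [show -(a*(0:ℂ)) = 0 from by ring, h00, show b*(0:ℂ) = 0 from by ring, h00,
      qPoch_q0, one_mul, div_one]
    have h2 := hs.symm
    simp only [Tm] at h2
    exact h2
  · have h := mainAux q a hq hq0 ha N b e he hb
    simp only [Tm] at h
    exact h
end
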